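/- arXiv:2305.06548 — 3 statements merged into one kernel-verified Lean document; each statement's English description precedes it below -/
import Mathlib

section
/- In the 2-layered dual-context modal type theory, every term well-typed at layer 0 is also well-typed at layer 1 in the same global and local contexts. -/
/-- Simple types: natural numbers, box modality, functions. -/
inductive Ty : Type
  | nat : Ty
  | box : Ty → Ty
  | arr : Ty → Ty → Ty

/-- Core types: built only from `nat` and arrows (no box). -/
inductive Core : Ty → Prop
  | nat : Core .nat
  | arr : ∀ {S T}, Core S → Core T → Core (.arr S T)

/-- Layer-1 types: boxes may occur, but only over core types. -/
inductive Type1 : Ty → Prop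
  | nat : Type1 .nat
  | arr : ∀ {S T}, Type1 S → Type1 T → Type1 (.arr S T)
  | box : ∀ {T}, Core T → Type1 (.box T)

/-- A context all of whose types are core. -/
def CoreCtx (Γ : List Ty) : Prop := ∀ T ∈ Γ, Core T

/-- A context all of whose types are layer-1 types. -/
def Type1Ctx (Γ : List Ty) : Prop := ∀ T ∈ Γ, Type1 T

/-- Terms (de Bruijn indices, separate local variables `var` and global variables `gvar`). -/
inductive Tm : Type
  | var : ℕ → Tm
  | gvar : ℕ → Tm
  | zero : Tm
  | succ : Tm → Tm
  | box : Tm → Tm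
  | letbox : Tm → Tm → Tm
  | lam : Tm → Tm
  | app : Tm → Tm → Tm

/-- Layered typing judgment `Ψ; Γ ⊢ᵢ t : T` of the 2-layered dual-context modal type theory.
`Ψ` is the global context, `Γ` the local context, `i ∈ {0,1}` the layer. -/
inductive Typing : List Ty → List Ty → Fin 2 → Tm → Ty → Prop
  | var0 : ∀ {Ψ Γ x T}, CoreCtx Ψ → CoreCtx Γ → Γ[x]? = some T → Typing Ψ Γ 0 (.var x) T
  | var1 : ∀ {Ψ Γ x T}, CoreCtx Ψ → Type1Ctx Γ → Γ[x]? = some T → Typing Ψ Γ 1 (.var x) T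
  | gvar0 : ∀ {Ψ Γ u T}, CoreCtx Ψ → CoreCtx Γ → Ψ[u]? = some T → Typing Ψ Γ 0 (.gvar u) T
  | gvar1 : ∀ {Ψ Γ u T}, CoreCtx Ψ → Type1Ctx Γ → Ψ[u]? = some T → Typing Ψ Γ 1 (.gvar u) T
  | zero0 : ∀ {Ψ Γ}, CoreCtx Ψ → CoreCtx Γ → Typing Ψ Γ 0 .zero .nat
  | zero1 : ∀ {Ψ Γ}, CoreCtx Ψ → Type1Ctx Γ → Typing Ψ Γ 1 .zero .nat
  | succ : ∀ {Ψ Γ i t}, Typing Ψ Γ i t .nat → Typing Ψ Γ i (.succ t) .nat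
  | lam : ∀ {Ψ Γ i t S T}, Typing Ψ (S :: Γ) i t T → Typing Ψ Γ i (.lam t) (.arr S T)
  | app : ∀ {Ψ Γ i t s S T},
      Typing Ψ Γ i t (.arr S T) → Typing Ψ Γ i s S → Typing Ψ Γ i (.app t s) T
  | box : ∀ {Ψ Γ t T}, Type1Ctx Γ → Typing Ψ [] 0 t T → Typing Ψ Γ 1 (.box t) (.box T)
  | letbox : ∀ {Ψ Γ s t T T'},
      Typing Ψ Γ 1 s (.box T) → Typing (T :: Ψ) Γ 1 t T' →
      Typing Ψ Γ 1 (.letbox s t) T'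

theorem Core.type1 {T : Ty} (h : Core T) : Type1 T := by
  induction h with
  | nat => exact .nat
  | arr _ _ ihS ihT => exact .arr ihS ihT

theorem CoreCtx.type1Ctx {Γ : List Ty} (h : CoreCtx Γ) : Type1Ctx Γ :=
  fun T hT => (h T hT).type1

theorem Typing.lift {Ψ Γ : List Ty} {i : Fin 2} {t : Tm} {T : Ty} (h : Typing Ψ Γ i t T) :
    Typing Ψ Γ 1 t T := by
  induction h with
  | var0 hΨ hΓ hx => exact .var1 hΨ hΓ.type1Ctx hx
  | var1 hΨ hΓ hx => exact .var1 hΨ hΓ hx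
  | gvar0 hΨ hΓ hu => exact .gvar1 hΨ hΓ.type1Ctx hu
  | gvar1 hΨ hΓ hu => exact .gvar1 hΨ hΓ hu
  | zero0 hΨ hΓ => exact .zero1 hΨ hΓ.type1Ctx
  | zero1 hΨ hΓ => exact .zero1 hΨ hΓ
  | succ _ ih => exact .succ ih
  | lam _ ih => exact .lam ih
  | app _ _ iht ihs => exact .app iht ihs
  | box hΓ ht => exact .box hΓ ht
  | letbox _ _ ihs iht => exact .letbox ihs iht

/-- Lifting: every term well-typed at layer 0 is also well-typed at layer 1
in the same global and local contexts. -/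
theorem lifting : ∀ {Ψ Γ : List Ty} {t : Tm} {T : Ty},
    Typing Ψ Γ 0 t T → Typing Ψ Γ 1 t T := fun h => h.lift
end

section
/- In the 2-layered dual-context modal type theory, the equivalence relation at layer 0 is syntactic equality: if Ψ; Γ ⊢₀ t ≈ s : T then t = s. -/
/-- Lift a renaming under a binder. -/
def liftR (f : ℕ → ℕ) : ℕ → ℕ
  | 0 => 0
  | n + 1 => f n + 1

/-- Simultaneous renaming of global variables (by `g`) and local variables (by `l`).
Local renaming is reset under `box` (boxed terms are locally closed); the global
renaming is lifted under the `letbox` binder and the local renaming under `lam`. -/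
def rename (g l : ℕ → ℕ) : Tm → Tm
  | .var x => .var (l x)
  | .gvar u => .gvar (g u)
  | .zero => .zero
  | .succ t => .succ (rename g l t)
  | .box t => .box (rename g id t)
  | .letbox s t => .letbox (rename g l s) (rename (liftR g) l t)
  | .lam t => .lam (rename g (liftR l) t)
  | .app t s => .app (rename g l t) (rename g l s)

/-- Shift indices `≥ c` up by one. -/
def shiftFn (c x : ℕ) : ℕ := if x < c then x else x + 1

/-- Shift local variables `≥ c` of a term up by one. -/
def lshift (c : ℕ) (t : Tm) : Tm := rename id (shiftFn c) t

/-- Shift global variables `≥ c` of a term up by one. -/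
def gshift (c : ℕ) (t : Tm) : Tm := rename (shiftFn c) id t

/-- Single local substitution `t[s/x]`: replace local variable `n` by `s`.
It goes under `lam` (lifting) and under `letbox` bodies (shifting the global
variables of `s`), but not under `box`. -/
def lsubst (n : ℕ) (s : Tm) : Tm → Tm
  | .var x => if x = n then s else if n < x then .var (x - 1) else .var x
  | .gvar u => .gvar u
  | .zero => .zero
  | .succ t => .succ (lsubst n s t)
  | .box t => .box t
  | .letbox a b => .letbox (lsubst n s a) (lsubst n (gshift 0 s) b)
  | .lam t => .lam (lsubst (n + 1) (lshift 0 s) t)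
  | .app a b => .app (lsubst n s a) (lsubst n s b)

/-- Single global substitution `t[s/u]`: replace global variable `n` by `s`
everywhere, including under `box`. -/
def gsubst (n : ℕ) (s : Tm) : Tm → Tm
  | .var x => .var x
  | .gvar u => if u = n then s else if n < u then .gvar (u - 1) else .gvar u
  | .zero => .zero
  | .succ t => .succ (gsubst n s t)
  | .box t => .box (gsubst n s t)
  | .letbox a b => .letbox (gsubst n s a) (gsubst (n + 1) (gshift 0 s) b)
  | .lam t => .lam (gsubst n s t)
  | .app a b => .app (gsubst n s a) (gsubst n s b)

/-- Layered equivalence judgment `Ψ; Γ ⊢ᵢ t ≈ s : T`: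
PER rules (symmetry, transitivity) and congruence rules at both layers
(for `box`/`letbox` only at layer 1), and β/η rules at layer 1 only. -/
inductive TmEquiv : List Ty → List Ty → Fin 2 → Tm → Tm → Ty → Prop
  | symm : ∀ {Ψ Γ i t s T}, TmEquiv Ψ Γ i t s T → TmEquiv Ψ Γ i s t T
  | trans : ∀ {Ψ Γ i t s r T}, TmEquiv Ψ Γ i t s T → TmEquiv Ψ Γ i s r T → TmEquiv Ψ Γ i t r T
  | var0 : ∀ {Ψ Γ x T}, CoreCtx Ψ → CoreCtx Γ → Γ[x]? = some T →
      TmEquiv Ψ Γ 0 (.var x) (.var x) T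
  | var1 : ∀ {Ψ Γ x T}, CoreCtx Ψ → Type1Ctx Γ → Γ[x]? = some T →
      TmEquiv Ψ Γ 1 (.var x) (.var x) T
  | gvar0 : ∀ {Ψ Γ u T}, CoreCtx Ψ → CoreCtx Γ → Ψ[u]? = some T →
      TmEquiv Ψ Γ 0 (.gvar u) (.gvar u) T
  | gvar1 : ∀ {Ψ Γ u T}, CoreCtx Ψ → Type1Ctx Γ → Ψ[u]? = some T →
      TmEquiv Ψ Γ 1 (.gvar u) (.gvar u) T
  | zero0 : ∀ {Ψ Γ}, CoreCtx Ψ → CoreCtx Γ → TmEquiv Ψ Γ 0 .zero .zero .nat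
  | zero1 : ∀ {Ψ Γ}, CoreCtx Ψ → Type1Ctx Γ → TmEquiv Ψ Γ 1 .zero .zero .nat
  | succ : ∀ {Ψ Γ i t t'}, TmEquiv Ψ Γ i t t' .nat → TmEquiv Ψ Γ i (.succ t) (.succ t') .nat
  | lam : ∀ {Ψ Γ i t t' S T}, TmEquiv Ψ (S :: Γ) i t t' T →
      TmEquiv Ψ Γ i (.lam t) (.lam t') (.arr S T)
  | app : ∀ {Ψ Γ i t t' s s' S T}, TmEquiv Ψ Γ i t t' (.arr S T) → TmEquiv Ψ Γ i s s' S →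
      TmEquiv Ψ Γ i (.app t s) (.app t' s') T
  | box : ∀ {Ψ Γ t t' T}, Type1Ctx Γ → TmEquiv Ψ [] 0 t t' T →
      TmEquiv Ψ Γ 1 (.box t) (.box t') (.box T)
  | letbox : ∀ {Ψ Γ s s' t t' T T'}, TmEquiv Ψ Γ 1 s s' (.box T) →
      TmEquiv (T :: Ψ) Γ 1 t t' T' → TmEquiv Ψ Γ 1 (.letbox s t) (.letbox s' t') T'
  | beta_app : ∀ {Ψ Γ t s S T}, Typing Ψ (S :: Γ) 1 t T → Typing Ψ Γ 1 s S →
      TmEquiv Ψ Γ 1 (.app (.lam t) s) (lsubst 0 s t) T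
  | beta_box : ∀ {Ψ Γ s t T T'}, Typing Ψ [] 0 s T → Typing (T :: Ψ) Γ 1 t T' →
      TmEquiv Ψ Γ 1 (.letbox (.box s) t) (gsubst 0 s t) T'
  | eta : ∀ {Ψ Γ t S T}, Typing Ψ Γ 1 t (.arr S T) →
      TmEquiv Ψ Γ 1 t (.lam (.app (lshift 0 t) (.var 0))) (.arr S T)

/-- At layer 0 the equivalence relation is just syntactic equality:
if `Ψ; Γ ⊢₀ t ≈ s : T` then `t = s`. -/
theorem layer0_equiv_is_equality : ∀ {Ψ Γ : List Ty} {t s : Tm} {T : Ty},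
    TmEquiv Ψ Γ 0 t s T → t = s := by
  intro Ψ Γ t s T h
  generalize hi : (0 : Fin 2) = i at h
  induction h with
  | symm _ ih => exact (ih hi).symm
  | trans _ _ ih₁ ih₂ => exact (ih₁ hi).trans (ih₂ hi)
  | succ _ ih => rw [ih hi]
  | lam _ ih => rw [ih hi]
  | app _ _ ih₁ ih₂ => rw [ih₁ hi, ih₂ hi]
  | var0 | var1 | gvar0 | gvar1 | zero0 | zero1 => rfl
  | box | letbox | beta_app | beta_box | eta => exact absurd hi (by decide)
end

section
/- Simultaneous global substitutions for the dual-context modal type theory are well-typed under application: if Ψ'; Γ ⊢ᵢ t : T and σ is a well-typed global substitution from Ψ to Ψ' (i.e. Ψ ⊢ σ : Ψ', with each component closed and typed at layer 0), then Ψ; Γ ⊢ᵢ t[σ] : T. -/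
/-- Lookup in a substitution (list of terms), with a default. -/
def lookupT (σ : List Tm) (u : ℕ) (dflt : Tm) : Tm :=
  match σ, u with
  | [], _ => dflt
  | t :: _, 0 => t
  | _ :: σ, u + 1 => lookupT σ u dflt

/-- Typing of simultaneous global substitutions: `Ψ ⊢ σ : Φ`, each component
closed and typed at layer 0. -/
inductive GSubTy : List Ty → List Tm → List Ty → Prop
  | nil : ∀ {Ψ}, CoreCtx Ψ → GSubTy Ψ [] []
  | cons : ∀ {Ψ σ Φ t T}, GSubTy Ψ σ Φ → Typing Ψ [] 0 t T →
      GSubTy Ψ (t :: σ) (T :: Φ)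

/-- Application of a simultaneous global substitution: `x[σ] = x`, `u[σ] = σ(u)`,
it commutes with `zero`, `succ`, `lam`, application and `box`, and under `letbox`
the substitution is extended with `u/u` (de Bruijn: `gvar 0` consed onto the
globally shifted substitution). -/
def applyG (σ : List Tm) : Tm → Tm
  | .var x => .var x
  | .gvar u => lookupT σ u (.gvar u)
  | .zero => .zero
  | .succ t => .succ (applyG σ t)
  | .box t => .box (applyG σ t)
  | .letbox a b => .letbox (applyG σ a) (applyG (.gvar 0 :: σ.map (gshift 0)) b)
  | .lam t => .lam (applyG σ t)
  | .app a b => .app (applyG σ a) (applyG σ b)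

theorem CoreCtx.cons {S : Ty} {Γ : List Ty} (hS : Core S) (hΓ : CoreCtx Γ) : CoreCtx (S :: Γ) :=
  List.forall_mem_cons.2 ⟨hS, hΓ⟩

theorem CoreCtx.head {S : Ty} {Γ : List Ty} (h : CoreCtx (S :: Γ)) : Core S :=
  (List.forall_mem_cons.1 h).1

theorem CoreCtx.tail {S : Ty} {Γ : List Ty} (h : CoreCtx (S :: Γ)) : CoreCtx Γ :=
  (List.forall_mem_cons.1 h).2

theorem Type1Ctx.cons {S : Ty} {Γ : List Ty} (hS : Type1 S) (hΓ : Type1Ctx Γ) :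
    Type1Ctx (S :: Γ) :=
  List.forall_mem_cons.2 ⟨hS, hΓ⟩

theorem Type1Ctx.tail {S : Ty} {Γ : List Ty} (h : Type1Ctx (S :: Γ)) : Type1Ctx Γ :=
  (List.forall_mem_cons.1 h).2

def LayerCtx : Fin 2 → List Ty → Prop
  | 0 => CoreCtx
  | 1 => Type1Ctx

theorem LayerCtx.tail {i : Fin 2} {S : Ty} {Γ : List Ty} (h : LayerCtx i (S :: Γ)) :
    LayerCtx i Γ := by
  fin_cases i
  · exact CoreCtx.tail h
  · exact Type1Ctx.tail h

theorem LayerCtx.cons_of_core {i : Fin 2} {S : Ty} {Γ : List Ty} (hS : Core S)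
    (hΓ : LayerCtx i Γ) : LayerCtx i (S :: Γ) := by
  fin_cases i
  · exact CoreCtx.cons hS hΓ
  · exact Type1Ctx.cons hS.type1 hΓ

theorem liftR_id : liftR id = id := by
  funext n
  cases n <;> rfl

namespace Typing

variable {Ψ Φ Γ Δ : List Ty} {i : Fin 2} {t : Tm} {S T : Ty}

theorem var_of_layerCtx {x : ℕ} (hΨ : CoreCtx Ψ) (hΓ : LayerCtx i Γ) (hx : Γ[x]? = some T) :
    Typing Ψ Γ i (.var x) T := by
  fin_cases i
  · exact var0 hΨ hΓ hx
  · exact var1 hΨ hΓ hx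

theorem gvar_of_layerCtx {u : ℕ} (hΨ : CoreCtx Ψ) (hΓ : LayerCtx i Γ) (hu : Ψ[u]? = some T) :
    Typing Ψ Γ i (.gvar u) T := by
  fin_cases i
  · exact gvar0 hΨ hΓ hu
  · exact gvar1 hΨ hΓ hu

theorem zero_of_layerCtx (hΨ : CoreCtx Ψ) (hΓ : LayerCtx i Γ) : Typing Ψ Γ i .zero .nat := by
  fin_cases i
  · exact zero0 hΨ hΓ
  · exact zero1 hΨ hΓ

theorem coreCtx_global (h : Typing Ψ Γ i t T) : CoreCtx Ψ := by
  induction h with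
  | var0 hΨ | var1 hΨ | gvar0 hΨ | gvar1 hΨ | zero0 hΨ | zero1 hΨ => exact hΨ
  | succ _ ih | lam _ ih | app _ _ ih _ | box _ _ ih => exact ih
  | letbox _ _ _ ih => exact ih.tail

theorem layerCtx (h : Typing Ψ Γ i t T) : LayerCtx i Γ := by
  induction h with
  | var0 _ hΓ | var1 _ hΓ | gvar0 _ hΓ | gvar1 _ hΓ | zero0 _ hΓ | zero1 _ hΓ | box hΓ => exact hΓ
  | succ _ ih | app _ _ ih _ | letbox _ _ ih _ => exact ih
  | lam _ ih => exact ih.tail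

theorem weaken_of_layer_zero (h : Typing Ψ Γ 0 t T) (hΓΔ : Γ <+: Δ) (hΔ : LayerCtx i Δ) :
    Typing Ψ Δ i t T := by
  suffices ∀ {j}, Typing Ψ Γ j t T → j = 0 → ∀ {Δ i}, Γ <+: Δ → LayerCtx i Δ → Typing Ψ Δ i t T
    from this h rfl hΓΔ hΔ
  clear h hΓΔ hΔ
  intro j h
  induction h with
  | var0 hΨ _ hx =>
    intro _ Δ _ hΓΔ hΔ
    obtain ⟨_, rfl⟩ := hΓΔ
    exact var_of_layerCtx hΨ hΔ (by grind)
  | gvar0 hΨ _ hu => exact fun _ _ _ _ hΔ => gvar_of_layerCtx hΨ hΔ hu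
  | zero0 hΨ _ => exact fun _ _ _ _ hΔ => zero_of_layerCtx hΨ hΔ
  | var1 | gvar1 | zero1 | box | letbox => intro hj; exact absurd hj (by decide)
  | succ _ ih => exact fun hj _ _ hΓΔ hΔ => succ (ih hj hΓΔ hΔ)
  | app _ _ ih₁ ih₂ => exact fun hj _ _ hΓΔ hΔ => app (ih₁ hj hΓΔ hΔ) (ih₂ hj hΓΔ hΔ)
  | lam ht ih =>
    intro hj _ _ hΓΔ hΔ
    subst hj
    have hS : Core _ := CoreCtx.head ht.layerCtx
    exact lam (ih rfl ((List.prefix_cons_inj _).2 hΓΔ) (hΔ.cons_of_core hS))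

theorem rename_global {ρ : ℕ → ℕ} (h : Typing Φ Γ i t T) (hΨ : CoreCtx Ψ)
    (hρ : ∀ u T', Φ[u]? = some T' → Ψ[ρ u]? = some T') : Typing Ψ Γ i (rename ρ id t) T := by
  induction h generalizing Ψ ρ with
  | var0 _ hΓ hx => exact var0 hΨ hΓ hx
  | var1 _ hΓ hx => exact var1 hΨ hΓ hx
  | gvar0 _ hΓ hu => exact gvar0 hΨ hΓ (hρ _ _ hu)
  | gvar1 _ hΓ hu => exact gvar1 hΨ hΓ (hρ _ _ hu)
  | zero0 _ hΓ => exact zero0 hΨ hΓ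
  | zero1 _ hΓ => exact zero1 hΨ hΓ
  | succ _ ih => exact succ (ih hΨ hρ)
  | lam _ ih =>
    rw [rename, liftR_id]
    exact lam (ih hΨ hρ)
  | app _ _ ih₁ ih₂ => exact app (ih₁ hΨ hρ) (ih₂ hΨ hρ)
  | box hΓ _ ih => exact box hΓ (ih hΨ hρ)
  | letbox _ ht ih₁ ih₂ =>
    refine letbox (ih₁ hΨ hρ) (ih₂ (hΨ.cons ht.coreCtx_global.head) ?_)
    rintro (_ | u) T' hu
    · simpa [liftR] using hu
    · exact hρ u T' hu

theorem gshift_zero (h : Typing Ψ Γ i t T) (hS : Core S) :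
    Typing (S :: Ψ) Γ i (gshift 0 t) T :=
  h.rename_global (h.coreCtx_global.cons hS) fun u T' hu => by simpa [shiftFn] using hu

end Typing

namespace GSubTy

variable {Ψ Φ : List Ty} {σ : List Tm} {S T : Ty}

theorem coreCtx (h : GSubTy Ψ σ Φ) : CoreCtx Ψ := by
  induction h with
  | nil hΨ => exact hΨ
  | cons _ _ ih => exact ih

theorem typing_lookupT (h : GSubTy Ψ σ Φ) {u : ℕ} (hu : Φ[u]? = some T) (d : Tm) :
    Typing Ψ [] 0 (lookupT σ u d) T := by
  induction h generalizing u with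
  | nil => simp at hu
  | cons _ ht ih =>
    cases u with
    | zero => cases hu; exact ht
    | succ u => exact ih hu

theorem map_gshift_zero (h : GSubTy Ψ σ Φ) (hS : Core S) :
    GSubTy (S :: Ψ) (σ.map (gshift 0)) Φ := by
  induction h with
  | nil hΨ => exact nil (hΨ.cons hS)
  | cons _ ht ih => exact cons ih (ht.gshift_zero hS)

theorem lift (h : GSubTy Ψ σ Φ) (hS : Core S) :
    GSubTy (S :: Ψ) (.gvar 0 :: σ.map (gshift 0)) (S :: Φ) :=
  have hΨS : CoreCtx (S :: Ψ) := h.coreCtx.cons hS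
  cons (h.map_gshift_zero hS) (Typing.gvar0 hΨS (fun _ h => nomatch h) rfl)

end GSubTy

/-- Simultaneous global substitutions are well-typed under application:
if `Ψ'; Γ ⊢ᵢ t : T` and `Ψ ⊢ σ : Ψ'` then `Ψ; Γ ⊢ᵢ t[σ] : T`. -/
theorem global_subst_application : ∀ {Ψ Ψ' Γ : List Ty} {i : Fin 2} {t : Tm} {T : Ty} {σ : List Tm},
    Typing Ψ' Γ i t T → GSubTy Ψ σ Ψ' → Typing Ψ Γ i (applyG σ t) T := by
  intro Ψ Ψ' Γ i t T σ h hσ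
  induction h generalizing Ψ σ with
  | var0 _ hΓ hx => exact .var0 hσ.coreCtx hΓ hx
  | var1 _ hΓ hx => exact .var1 hσ.coreCtx hΓ hx
  | gvar0 _ hΓ hu | gvar1 _ hΓ hu =>
    exact (hσ.typing_lookupT hu _).weaken_of_layer_zero List.nil_prefix hΓ
  | zero0 _ hΓ => exact .zero0 hσ.coreCtx hΓ
  | zero1 _ hΓ => exact .zero1 hσ.coreCtx hΓ
  | succ _ ih => exact .succ (ih hσ)
  | lam _ ih => exact .lam (ih hσ)
  | app _ _ ih₁ ih₂ => exact .app (ih₁ hσ) (ih₂ hσ)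
  | box hΓ _ ih => exact .box hΓ (ih hσ)
  | letbox _ ht ih₁ ih₂ => exact .letbox (ih₁ hσ) (ih₂ (hσ.lift ht.coreCtx_global.head))
end
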